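/- arXiv:1312.5249 — 2 statements merged into one kernel-verified Lean document; each statement's English description precedes it below -/
import Mathlib

section
/- For real numbers β ≥ γ ≥ 0 with β + γ > 1, and integers k₁, k₂, the sum over n ∈ ℤ of 1/(⟨n - k₁⟩^β ⟨n - k₂⟩^γ) is bounded by a constant (depending only on β, γ) times ⟨k₁ - k₂⟩^{-γ} φ_β(k₁ - k₂), where φ_β(k) = 1 if β > 1, φ_β(k) = log(1 + ⟨k⟩) if β = 1, and φ_β(k) = ⟨k⟩^{1-β} if β < 1. -/
/-!
Put `k = k₁ - k₂` and `x = n - k₂`, so that the summand is `⟨x - k⟩^{-β} ⟨x⟩^{-γ}`, and split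
according to the size of `x`:
* if `2|x| ≤ |k|`, then `⟨x - k⟩ ≳ ⟨k⟩` and, as `⟨x⟩ ≤ ⟨k⟩` and `γ ≤ β`,
  `⟨x⟩^{-γ} ≤ ⟨k⟩^{β-γ} ⟨x⟩^{-β}`, so the summand is `≲ ⟨k⟩^{-γ} ⟨x⟩^{-β}` with `|x| ≤ 3|k|`;
* if `|k| < 2|x| ≤ 4|k|`, then `⟨x⟩ ≳ ⟨k⟩`, so the summand is `≲ ⟨k⟩^{-γ} ⟨x - k⟩^{-β}` with
  `|x - k| ≤ 3|k|`;
* if `2|k| < |x|`, then `⟨x - k⟩ ≳ ⟨x⟩`, so the summand is `≲ ⟨x⟩^{-(β+γ)}` with `|k| < |x|`.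
The first two regions leave the partial sum `∑_{|m| ≤ 3|k|} ⟨m⟩^{-β} ≲ φ_β(3k) ≲ φ_β(k)`
(comparison with `∫ x^{-β}` for `β < 1`, the harmonic numbers for `β = 1`, convergence for
`β > 1`); the third leaves the tail `∑_{|x| > |k|} ⟨x⟩^{-(β+γ)} ≲ ⟨k⟩^{1-β-γ} ≲ ⟨k⟩^{-γ} φ_β(k)`,
which is finite because `β + γ > 1`.
-/

open Real

/-- Japanese bracket. -/
noncomputable def jb (x : ℝ) : ℝ := Real.sqrt (1 + x ^ 2)

/-- The function `φ_β` describing the size of the sum `∑_{|n| ≤ |k|} ⟨n⟩^{-β}`. -/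
noncomputable def phi (β : ℝ) (k : ℝ) : ℝ :=
  if 1 < β then 1 else if β = 1 then Real.log (1 + jb k) else jb k ^ (1 - β)

lemma one_le_jb (x : ℝ) : 1 ≤ jb x :=
  Real.one_le_sqrt.mpr (by nlinarith [sq_nonneg x])

lemma jb_pos (x : ℝ) : 0 < jb x :=
  one_pos.trans_le (one_le_jb x)

lemma jb_rpow_nonneg (x s : ℝ) : 0 ≤ jb x ^ s :=
  Real.rpow_nonneg (jb_pos x).le s

lemma jb_abs (x : ℝ) : jb |x| = jb x := by
  simp [jb]

lemma abs_le_jb (x : ℝ) : |x| ≤ jb x :=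
  Real.abs_le_sqrt (by linarith)

lemma jb_le_one_add_abs (x : ℝ) : jb x ≤ 1 + |x| :=
  (Real.sqrt_le_left (by positivity)).mpr (by nlinarith [sq_abs x, abs_nonneg x])

lemma jb_le_mul_of_abs_le {c x y : ℝ} (hc : 1 ≤ c) (h : |y| ≤ c * |x|) : jb y ≤ c * jb x := by
  rw [jb, jb, ← Real.sqrt_sq (by linarith : 0 ≤ c), ← Real.sqrt_mul (sq_nonneg c)]
  refine Real.sqrt_le_sqrt ?_
  have : y ^ 2 ≤ c ^ 2 * x ^ 2 := by
    rw [← sq_abs y, ← sq_abs x, ← mul_pow]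
    exact pow_le_pow_left₀ (abs_nonneg y) h 2
  nlinarith

lemma add_one_le_two_mul_jb {x : ℝ} (hx : 0 ≤ x) : x + 1 ≤ 2 * jb x := by
  linarith [abs_le_jb x, abs_of_nonneg hx, one_le_jb x]

lemma rpow_neg_le_two_rpow_mul {a b s : ℝ} (ha : 0 < a) (hab : a ≤ 2 * b) (hs : 0 ≤ s) :
    b ^ (-s) ≤ 2 ^ s * a ^ (-s) :=
  calc b ^ (-s) ≤ (a / 2) ^ (-s) :=
        Real.rpow_le_rpow_of_nonpos (by positivity) (by linarith) (by linarith)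
    _ = 2 ^ s * a ^ (-s) := by
        rw [Real.div_rpow ha.le zero_le_two, Real.rpow_neg zero_le_two, div_inv_eq_mul, mul_comm]

lemma jb_rpow_neg_le {s x y : ℝ} (hs : 0 ≤ s) (h : |y| ≤ 2 * |x|) :
    jb x ^ (-s) ≤ 2 ^ s * jb y ^ (-s) :=
  rpow_neg_le_two_rpow_mul (jb_pos y) (jb_le_mul_of_abs_le one_le_two h) hs

lemma jb_rpow_neg_le_add_one {s x : ℝ} (hs : 0 ≤ s) (hx : 0 ≤ x) :
    jb x ^ (-s) ≤ 2 ^ s * (x + 1) ^ (-s) :=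
  rpow_neg_le_two_rpow_mul (by positivity) (add_one_le_two_mul_jb hx) hs

lemma phi_abs (β x : ℝ) : phi β |x| = phi β x := by
  simp only [phi, jb_abs]

lemma rpow_one_sub_le_phi (β : ℝ) : ∃ C > 0, ∀ x : ℝ, jb x ^ (1 - β) ≤ C * phi β x := by
  rcases lt_trichotomy β 1 with hβ | rfl | hβ
  · refine ⟨1, one_pos, fun x => ?_⟩
    simp [phi, hβ.not_gt, hβ.ne]
  · refine ⟨(Real.log 2)⁻¹, by positivity, fun x => ?_⟩
    have hlog : Real.log 2 ≤ Real.log (1 + jb x) :=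
      Real.log_le_log two_pos (by linarith [one_le_jb x])
    simp only [phi, lt_irrefl, if_false, if_true, sub_self, Real.rpow_zero]
    rw [inv_mul_eq_div, le_div_iff₀ (Real.log_pos one_lt_two), one_mul]
    exact hlog
  · refine ⟨1, one_pos, fun x => ?_⟩
    simp only [phi, if_pos hβ, one_mul]
    exact Real.rpow_le_one_of_one_le_of_nonpos (one_le_jb x) (by linarith)

lemma phi_natCast_mul_le {β : ℝ} (hβ : 0 ≤ β) {c : ℕ} (hc : 1 ≤ c) (x : ℝ) :
    phi β (c * x) ≤ c * phi β x := by
  have hc' : (1 : ℝ) ≤ c := by exact_mod_cast hc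
  have hjb : jb (c * x) ≤ c * jb x :=
    jb_le_mul_of_abs_le hc' (by rw [abs_mul, Nat.abs_cast])
  unfold phi
  split_ifs with h1
  · simpa using hc'
  · have hbernoulli : 1 + c * jb x ≤ (1 + jb x) ^ c :=
      one_add_mul_le_pow (by linarith [one_le_jb x]) c
    calc Real.log (1 + jb (c * x)) ≤ Real.log ((1 + jb x) ^ c) :=
          Real.log_le_log (by linarith [one_le_jb (c * x)]) (by linarith)
      _ = c * Real.log (1 + jb x) := Real.log_pow (1 + jb x) c
  · have h1β : 1 - β ≤ 1 := by linarith
    calc jb (c * x) ^ (1 - β) ≤ (c * jb x) ^ (1 - β) :=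
          Real.rpow_le_rpow (jb_pos _).le hjb (by linarith [not_lt.mp h1])
      _ = (c : ℝ) ^ (1 - β) * jb x ^ (1 - β) := Real.mul_rpow (by positivity) (jb_pos x).le
      _ ≤ c * jb x ^ (1 - β) :=
          mul_le_mul_of_nonneg_right (Real.rpow_le_self_of_one_le hc' h1β)
            (jb_rpow_nonneg x _)

lemma sum_range_add_one_rpow_neg_le {β : ℝ} (hβ0 : 0 ≤ β) (hβ1 : β < 1) (N : ℕ) :
    ∑ j ∈ Finset.range N, ((j : ℝ) + 1) ^ (-β) ≤ (N : ℝ) ^ (1 - β) / (1 - β) := by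
  rcases N.eq_zero_or_pos with rfl | hN
  · simp [Real.zero_rpow (by linarith : 1 - β ≠ 0)]
  -- the term `j = 0` is kept apart: on `[0, 1)` the comparison with `x ^ (-β)` breaks at `x = 0`,
  -- where `0 ^ (-β) = 0`
  have hint : ∑ i ∈ Finset.Ico 1 N, ((i : ℝ) + 1) ^ (-β) ≤ ∫ x in (1 : ℕ)..(N : ℕ), x ^ (-β) := by
    refine sum_Ico_le_integral_of_le (f := fun x => (x + 1) ^ (-β)) hN (fun i hi x hx => ?_) ?_
    · have hi1 : (1 : ℝ) ≤ i := by exact_mod_cast hi.1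
      exact Real.rpow_le_rpow_of_nonpos (by linarith [hx.1]) (by push_cast at hx; linarith [hx.2])
        (by linarith)
    · exact (intervalIntegrable_iff_integrableOn_Ico_of_le (by exact_mod_cast hN)).mp
        (intervalIntegral.intervalIntegrable_rpow' (by linarith))
  rw [integral_rpow (Or.inl (by linarith)), Nat.cast_one, Real.one_rpow,
    show -β + 1 = 1 - β by ring] at hint
  rw [Finset.range_eq_Ico, Finset.sum_eq_sum_Ico_succ_bot hN]
  have h1β : 0 < 1 - β := by linarith
  have hinv : (1 : ℝ) ≤ 1 / (1 - β) := by rw [le_div_iff₀ h1β]; linarith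
  calc ((0 : ℕ) + 1 : ℝ) ^ (-β) + ∑ i ∈ Finset.Ico (0 + 1) N, ((i : ℝ) + 1) ^ (-β)
      ≤ 1 + ((N : ℝ) ^ (1 - β) - 1) / (1 - β) := by simpa using hint
    _ ≤ (N : ℝ) ^ (1 - β) / (1 - β) := by rw [sub_div]; linarith

lemma summable_nat_add_one_rpow_neg {s : ℝ} (hs : 1 < s) :
    Summable fun j : ℕ => ((j : ℝ) + 1) ^ (-s) := by
  simpa using (summable_nat_add_iff 1).mpr (Real.summable_nat_rpow.mpr (by linarith))

lemma sum_range_succ_add_one_rpow_neg_le {β : ℝ} (hβ0 : 0 ≤ β) (hβ1 : β < 1) (N : ℕ) :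
    ∑ j ∈ Finset.range (N + 1), ((j : ℝ) + 1) ^ (-β) ≤ 2 / (1 - β) * jb N ^ (1 - β) := by
  have h1β : 0 < 1 - β := by linarith
  have hN : ((N + 1 : ℕ) : ℝ) ≤ 2 * jb N := by
    push_cast
    exact add_one_le_two_mul_jb N.cast_nonneg
  calc ∑ j ∈ Finset.range (N + 1), ((j : ℝ) + 1) ^ (-β)
      ≤ ((N + 1 : ℕ) : ℝ) ^ (1 - β) / (1 - β) := sum_range_add_one_rpow_neg_le hβ0 hβ1 _
    _ ≤ (2 * jb N) ^ (1 - β) / (1 - β) := by gcongr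
    _ = 2 ^ (1 - β) / (1 - β) * jb N ^ (1 - β) := by
        rw [Real.mul_rpow zero_le_two (jb_pos _).le, mul_div_right_comm]
    _ ≤ 2 / (1 - β) * jb N ^ (1 - β) := by
        gcongr
        · exact jb_rpow_nonneg _ _
        · exact Real.rpow_le_self_of_one_le one_le_two (by linarith)

lemma sum_range_succ_add_one_inv_le (N : ℕ) :
    ∑ j ∈ Finset.range (N + 1), ((j : ℝ) + 1) ^ (-1 : ℝ)
      ≤ ((Real.log 2)⁻¹ + 1) * Real.log (1 + jb N) := by
  have hlog2 : 0 < Real.log 2 := Real.log_pos one_lt_two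
  have hlog : 1 ≤ (Real.log 2)⁻¹ * Real.log (1 + jb N) := by
    rw [inv_mul_eq_div, le_div_iff₀ hlog2, one_mul]
    exact Real.log_le_log two_pos (by linarith [one_le_jb N])
  have hharm : ∑ j ∈ Finset.range (N + 1), ((j : ℝ) + 1) ^ (-1 : ℝ) = harmonic (N + 1) := by
    simp [harmonic, Real.rpow_neg_one]
  calc ∑ j ∈ Finset.range (N + 1), ((j : ℝ) + 1) ^ (-1 : ℝ)
      ≤ 1 + Real.log ((N + 1 : ℕ) : ℝ) := hharm ▸ harmonic_le_one_add_log (N + 1)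
    _ ≤ 1 + Real.log (1 + jb N) := by
        gcongr
        push_cast
        linarith [abs_le_jb N, abs_of_nonneg (N.cast_nonneg : (0 : ℝ) ≤ N)]
    _ ≤ ((Real.log 2)⁻¹ + 1) * Real.log (1 + jb N) := by linarith

lemma sum_range_succ_add_one_rpow_neg_le_phi {β : ℝ} (hβ : 0 ≤ β) :
    ∃ C > 0, ∀ N : ℕ, ∑ j ∈ Finset.range (N + 1), ((j : ℝ) + 1) ^ (-β) ≤ C * phi β N := by
  rcases lt_trichotomy β 1 with hβ1 | rfl | hβ1
  · refine ⟨2 / (1 - β), div_pos two_pos (by linarith), fun N => ?_⟩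
    simpa [phi, hβ1.not_gt, hβ1.ne] using sum_range_succ_add_one_rpow_neg_le hβ hβ1 N
  · exact ⟨(Real.log 2)⁻¹ + 1, by positivity, fun N => by
      simpa [phi] using sum_range_succ_add_one_inv_le N⟩
  · have hbound (N : ℕ) : ∑ j ∈ Finset.range (N + 1), ((j : ℝ) + 1) ^ (-β)
        ≤ (∑' j : ℕ, ((j : ℝ) + 1) ^ (-β)) * phi β N := by
      rw [phi, if_pos hβ1, mul_one]
      exact (summable_nat_add_one_rpow_neg hβ1).sum_le_tsum _ (fun j _ => by positivity)
    refine ⟨_, ?_, hbound⟩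
    simpa using zero_lt_one.trans_le (by simpa [phi, hβ1] using hbound 0)

lemma tsum_nat_add_rpow_neg_le {s : ℝ} (hs : 1 < s) (N : ℕ) :
    ∑' i : ℕ, (((i + N + 1 : ℕ) : ℝ) + 1) ^ (-s) ≤ ((N : ℝ) + 1) ^ (1 - s) / (s - 1) := by
  have hN : (0 : ℝ) < ((N + 1 : ℕ) : ℝ) := by positivity
  -- integral test based at `N + 1 > 0`, away from the junk value `0 ^ (-s) = 0`
  have htest := AntitoneOn.tsum_comp_add_le_integral (f := fun x : ℝ => x ^ (-s)) (N + 1)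
    ((antitoneOn_rpow_Ioi_of_exponent_nonpos (by linarith)).mono
      (Set.Ici_subset_Ioi.mpr hN))
    (integrableOn_Ioi_rpow_of_lt (by linarith) hN)
    (fun t ht => Real.rpow_nonneg (hN.trans ht).le _)
  rw [integral_Ioi_rpow_of_lt (by linarith) hN] at htest
  convert htest using 1
  · congr 1 with i
    push_cast
    ring_nf
  · push_cast
    rw [show -s + 1 = 1 - s by ring, neg_div, ← div_neg, neg_sub]

lemma summable_nat_jb_rpow_neg {s : ℝ} (hs : 1 < s) : Summable fun j : ℕ => jb j ^ (-s) :=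
  ((summable_nat_add_one_rpow_neg hs).mul_left (2 ^ s)).of_nonneg_of_le
    (fun _ => jb_rpow_nonneg _ _)
    (fun j => jb_rpow_neg_le_add_one (by linarith) j.cast_nonneg)

noncomputable def jbTrunc (s R y : ℝ) : ℝ := if |y| ≤ R then jb y ^ (-s) else 0

noncomputable def jbTail (s R y : ℝ) : ℝ := if R < |y| then jb y ^ (-s) else 0

lemma jbTrunc_of_abs_le {s R y : ℝ} (h : |y| ≤ R) : jbTrunc s R y = jb y ^ (-s) :=
  if_pos h

lemma jbTail_of_lt_abs {s R y : ℝ} (h : R < |y|) : jbTail s R y = jb y ^ (-s) :=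
  if_pos h

lemma jbTrunc_nonneg (s R y : ℝ) : 0 ≤ jbTrunc s R y := by
  unfold jbTrunc
  split_ifs
  exacts [jb_rpow_nonneg y _, le_rfl]

lemma jbTail_nonneg (s R y : ℝ) : 0 ≤ jbTail s R y := by
  unfold jbTail
  split_ifs
  exacts [jb_rpow_nonneg y _, le_rfl]

lemma jbTrunc_neg (s R y : ℝ) : jbTrunc s R (-y) = jbTrunc s R y := by
  simp [jbTrunc, jb]

lemma jbTail_neg (s R y : ℝ) : jbTail s R (-y) = jbTail s R y := by
  simp [jbTail, jb]

lemma jbTail_le (s R y : ℝ) : jbTail s R y ≤ jb y ^ (-s) := by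
  unfold jbTail
  split_ifs
  exacts [le_rfl, jb_rpow_nonneg y _]

lemma hasSum_nat_jbTrunc (s : ℝ) (N : ℕ) :
    HasSum (fun j : ℕ => jbTrunc s N j) (∑ j ∈ Finset.range (N + 1), jb j ^ (-s)) := by
  have hrange (j : ℕ) : j ∈ Finset.range (N + 1) ↔ |(j : ℝ)| ≤ N := by
    simp
  rw [← Finset.sum_congr rfl fun j hj => jbTrunc_of_abs_le ((hrange j).mp hj)]
  exact hasSum_sum_of_ne_finset_zero fun j hj => if_neg (mt (hrange j).mpr hj)

lemma summable_nat_jbTail {s : ℝ} (hs : 1 < s) (R : ℝ) : Summable fun j : ℕ => jbTail s R j :=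
  (summable_nat_jb_rpow_neg hs).of_nonneg_of_le (fun _ => jbTail_nonneg _ _ _)
    (fun _ => jbTail_le _ _ _)

lemma tsum_nat_jbTail_le {s : ℝ} (hs : 1 < s) (N : ℕ) :
    ∑' j : ℕ, jbTail s N j ≤ 2 ^ s / (s - 1) * jb N ^ (1 - s) := by
  have hF := summable_nat_jbTail hs N
  have hhead : ∑ j ∈ Finset.range (N + 1), jbTail s N j = 0 :=
    Finset.sum_eq_zero fun j hj => if_neg (by simpa [Nat.lt_succ_iff] using hj)
  have htail (i : ℕ) :
      jbTail s N (i + (N + 1) : ℕ) ≤ 2 ^ s * (((i + N + 1 : ℕ) : ℝ) + 1) ^ (-s) :=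
    (jbTail_le _ _ _).trans (jb_rpow_neg_le_add_one (by linarith) (Nat.cast_nonneg _))
  have hdom : Summable fun i : ℕ => 2 ^ s * (((i + N + 1 : ℕ) : ℝ) + 1) ^ (-s) :=
    ((summable_nat_add_iff (N + 1)).mpr (summable_nat_add_one_rpow_neg hs)).mul_left _
  have hjb : ((N : ℝ) + 1) ^ (1 - s) ≤ jb N ^ (1 - s) :=
    Real.rpow_le_rpow_of_nonpos (jb_pos _) (by simpa [add_comm] using jb_le_one_add_abs (N : ℝ))
      (by linarith)
  rw [← hF.sum_add_tsum_nat_add (N + 1), hhead, zero_add]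
  calc ∑' i : ℕ, jbTail s N (i + (N + 1) : ℕ)
      ≤ ∑' i : ℕ, 2 ^ s * (((i + N + 1 : ℕ) : ℝ) + 1) ^ (-s) :=
        ((summable_nat_add_iff (N + 1)).mpr hF).tsum_le_tsum htail hdom
    _ ≤ 2 ^ s * (((N : ℝ) + 1) ^ (1 - s) / (s - 1)) := by
        rw [tsum_mul_left]
        exact mul_le_mul_of_nonneg_left (tsum_nat_add_rpow_neg_le hs N) (by positivity)
    _ ≤ 2 ^ s / (s - 1) * jb N ^ (1 - s) := by
        rw [mul_div_assoc', div_mul_eq_mul_div]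
        gcongr

lemma summable_int_of_even {F : ℝ → ℝ} (hF : ∀ x, F (-x) = F x)
    (hs : Summable fun j : ℕ => F j) : Summable fun n : ℤ => F n := by
  refine Summable.of_nat_of_neg_add_one (by simpa using hs)
    (((summable_nat_add_iff 1).mpr hs).congr fun j => ?_)
  push_cast
  rw [hF]

lemma tsum_int_le_two_mul_tsum_nat_of_even {F : ℝ → ℝ} (hF : ∀ x, F (-x) = F x)
    (h0 : ∀ x, 0 ≤ F x) (hs : Summable fun j : ℕ => F j) :
    ∑' n : ℤ, F n ≤ 2 * ∑' j : ℕ, F j := by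
  have hs' : Summable fun j : ℕ => F (j + 1 : ℕ) := (summable_nat_add_iff 1).mpr hs
  rw [tsum_of_nat_of_neg_add_one (by simpa using hs) (hs'.congr fun j => by push_cast; rw [hF])]
  have hshift : ∑' j : ℕ, F (j + 1 : ℕ) ≤ ∑' j : ℕ, F j := by
    rw [hs.tsum_eq_zero_add]
    exact le_add_of_nonneg_left (h0 _)
  simp only [Int.cast_natCast, Int.cast_neg, Int.cast_add, Int.cast_one, hF]
  push_cast at hshift
  linarith

lemma summable_int_jbTrunc (s : ℝ) (N : ℕ) : Summable fun n : ℤ => jbTrunc s N n :=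
  summable_int_of_even (jbTrunc_neg s N) (hasSum_nat_jbTrunc s N).summable

lemma summable_int_jbTail {s : ℝ} (hs : 1 < s) (N : ℕ) : Summable fun n : ℤ => jbTail s N n :=
  summable_int_of_even (jbTail_neg s N) (summable_nat_jbTail hs N)

lemma exists_tsum_int_jbTrunc_le_phi {β : ℝ} (hβ : 0 ≤ β) :
    ∃ C > 0, ∀ N : ℕ, ∑' n : ℤ, jbTrunc β N n ≤ C * phi β N := by
  obtain ⟨C, hC, hbound⟩ := sum_range_succ_add_one_rpow_neg_le_phi hβ
  refine ⟨2 * (2 ^ β * C), by positivity, fun N => ?_⟩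
  have hsum := hasSum_nat_jbTrunc β N
  calc ∑' n : ℤ, jbTrunc β N n
      ≤ 2 * ∑ j ∈ Finset.range (N + 1), jb j ^ (-β) := by
        rw [← hsum.tsum_eq]
        exact tsum_int_le_two_mul_tsum_nat_of_even (jbTrunc_neg β N) (jbTrunc_nonneg β N)
          hsum.summable
    _ ≤ 2 * (2 ^ β * ∑ j ∈ Finset.range (N + 1), ((j : ℝ) + 1) ^ (-β)) := by
        gcongr 2 * ?_
        rw [Finset.mul_sum]
        exact Finset.sum_le_sum fun j _ => jb_rpow_neg_le_add_one hβ (Nat.cast_nonneg j)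
    _ ≤ 2 * (2 ^ β * (C * phi β N)) := by
        gcongr
        exact hbound N
    _ = 2 * (2 ^ β * C) * phi β N := by ring

lemma exists_tsum_int_jbTail_le {s : ℝ} (hs : 1 < s) :
    ∃ C > 0, ∀ N : ℕ, ∑' n : ℤ, jbTail s N n ≤ C * jb N ^ (1 - s) := by
  refine ⟨2 * (2 ^ s / (s - 1)), by have := sub_pos.mpr hs; positivity, fun N => ?_⟩
  calc ∑' n : ℤ, jbTail s N n ≤ 2 * ∑' j : ℕ, jbTail s N j :=
        tsum_int_le_two_mul_tsum_nat_of_even (jbTail_neg s N) (jbTail_nonneg s N)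
          (summable_nat_jbTail hs N)
    _ ≤ 2 * (2 ^ s / (s - 1) * jb N ^ (1 - s)) :=
        mul_le_mul_of_nonneg_left (tsum_nat_jbTail_le hs N) zero_le_two
    _ = 2 * (2 ^ s / (s - 1)) * jb N ^ (1 - s) := by ring

lemma summable_int_comp_sub {F : ℝ → ℝ} (hF : Summable fun n : ℤ => F n) (m : ℤ) :
    Summable fun n : ℤ => F (n - m) :=
  ((Equiv.subRight m).summable_iff.mpr hF).congr fun n => by simp

lemma tsum_int_comp_sub (F : ℝ → ℝ) (m : ℤ) : ∑' n : ℤ, F (n - m) = ∑' n : ℤ, F n := by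
  simpa using (Equiv.subRight m).tsum_eq (fun n : ℤ => F n)

section Regions

variable {β γ k x : ℝ}

lemma jb_rpow_mul_le_of_two_mul_abs_le (hγ : 0 ≤ γ) (hβγ : γ ≤ β) (h : 2 * |x| ≤ |k|) :
    jb (x - k) ^ (-β) * jb x ^ (-γ) ≤ 2 ^ β * jb k ^ (-γ) * jb x ^ (-β) := by
  have hβ : 0 ≤ β := hγ.trans hβγ
  have hxk : |k| ≤ 2 * |x - k| := by linarith [abs_sub_abs_le_abs_sub k x, abs_sub_comm x k]
  have hjb : jb x ≤ jb k := by
    simpa using jb_le_mul_of_abs_le le_rfl (by linarith [abs_nonneg x] : |x| ≤ 1 * |k|)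
  calc jb (x - k) ^ (-β) * jb x ^ (-γ) = jb (x - k) ^ (-β) * (jb x ^ (β - γ) * jb x ^ (-β)) := by
        rw [← Real.rpow_add (jb_pos x)]
        ring_nf
    _ ≤ (2 ^ β * jb k ^ (-β)) * (jb k ^ (β - γ) * jb x ^ (-β)) :=
        mul_le_mul (jb_rpow_neg_le hβ hxk)
          (mul_le_mul_of_nonneg_right (Real.rpow_le_rpow (jb_pos x).le hjb (by linarith))
            (jb_rpow_nonneg x _))
          (mul_nonneg (jb_rpow_nonneg x _) (jb_rpow_nonneg x _))
          (mul_nonneg (by positivity) (jb_rpow_nonneg k _))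
    _ = 2 ^ β * jb k ^ (-γ) * jb x ^ (-β) := by
        rw [show -γ = -β + (β - γ) by ring, Real.rpow_add (jb_pos k)]
        ring

lemma jb_rpow_mul_le_of_abs_le_two_mul (hγ : 0 ≤ γ) (hβγ : γ ≤ β) (h : |k| ≤ 2 * |x|) :
    jb (x - k) ^ (-β) * jb x ^ (-γ) ≤ 2 ^ β * jb k ^ (-γ) * jb (x - k) ^ (-β) := by
  have h2 : (2 : ℝ) ^ γ ≤ 2 ^ β := Real.rpow_le_rpow_of_exponent_le one_le_two hβγ
  rw [mul_comm]
  exact mul_le_mul_of_nonneg_right ((jb_rpow_neg_le hγ h).trans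
    (mul_le_mul_of_nonneg_right h2 (jb_rpow_nonneg k _))) (jb_rpow_nonneg _ _)

lemma jb_rpow_mul_le_of_two_mul_le_abs (hβ : 0 ≤ β) (h : 2 * |k| ≤ |x|) :
    jb (x - k) ^ (-β) * jb x ^ (-γ) ≤ 2 ^ β * jb x ^ (-(β + γ)) := by
  have hxk : |x| ≤ 2 * |x - k| := by linarith [abs_sub_abs_le_abs_sub x k]
  rw [neg_add, Real.rpow_add (jb_pos x), ← mul_assoc]
  exact mul_le_mul_of_nonneg_right (jb_rpow_neg_le hβ hxk) (jb_rpow_nonneg x _)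

end Regions

lemma jb_rpow_mul_le_jbTrunc_add_jbTail {β γ : ℝ} (hγ : 0 ≤ γ) (hβγ : γ ≤ β) (k x : ℝ) :
    jb (x - k) ^ (-β) * jb x ^ (-γ) ≤
      2 ^ β * (jb k ^ (-γ) * (jbTrunc β (3 * |k|) x + jbTrunc β (3 * |k|) (x - k))
        + jbTail (β + γ) |k| x) := by
  have hx : 0 ≤ 2 ^ β * jb k ^ (-γ) * jbTrunc β (3 * |k|) x :=
    mul_nonneg (mul_nonneg (by positivity) (jb_rpow_nonneg k _)) (jbTrunc_nonneg _ _ _)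
  have hxk : 0 ≤ 2 ^ β * jb k ^ (-γ) * jbTrunc β (3 * |k|) (x - k) :=
    mul_nonneg (mul_nonneg (by positivity) (jb_rpow_nonneg k _)) (jbTrunc_nonneg _ _ _)
  have htail : 0 ≤ 2 ^ β * jbTail (β + γ) |k| x :=
    mul_nonneg (by positivity) (jbTail_nonneg _ _ _)
  have hk := abs_nonneg k
  by_cases hfar : 2 * |k| < |x|
  · have := jb_rpow_mul_le_of_two_mul_le_abs (γ := γ) (hγ.trans hβγ) hfar.le
    rw [jbTail_of_lt_abs (y := x) (by linarith)] at htail ⊢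
    linarith
  by_cases hnear : 2 * |x| ≤ |k|
  · have := jb_rpow_mul_le_of_two_mul_abs_le hγ hβγ hnear
    rw [jbTrunc_of_abs_le (y := x) (by linarith [abs_nonneg x])] at hx ⊢
    linarith
  · have := jb_rpow_mul_le_of_abs_le_two_mul hγ hβγ (not_le.mp hnear).le
    rw [jbTrunc_of_abs_le (y := x - k) (by linarith [abs_sub x k])] at hxk ⊢
    linarith

lemma tsum_jb_rpow_mul_le_tsum_jbTrunc_add_tsum_jbTail {β γ : ℝ} (hγ : 0 ≤ γ) (hβγ : γ ≤ β)
    (k₁ k₂ : ℤ) (hP : Summable fun n : ℤ => jbTrunc β (3 * |(k₁ - k₂ : ℝ)|) n)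
    (hT : Summable fun n : ℤ => jbTail (β + γ) |(k₁ - k₂ : ℝ)| n) :
    ∑' n : ℤ, jb (n - k₁) ^ (-β) * jb (n - k₂) ^ (-γ) ≤
      2 ^ β * (jb (k₁ - k₂) ^ (-γ) * (2 * ∑' n : ℤ, jbTrunc β (3 * |(k₁ - k₂ : ℝ)|) n)
        + ∑' n : ℤ, jbTail (β + γ) |(k₁ - k₂ : ℝ)| n) := by
  set k : ℝ := k₁ - k₂ with hk
  set P := jbTrunc β (3 * |k|)
  set T := jbTail (β + γ) |k|
  have hpt (n : ℤ) : jb (n - k₁) ^ (-β) * jb (n - k₂) ^ (-γ)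
      ≤ 2 ^ β * (jb k ^ (-γ) * (P (n - k₂) + P (n - k₁)) + T (n - k₂)) := by
    have := jb_rpow_mul_le_jbTrunc_add_jbTail hγ hβγ k (n - k₂)
    rwa [show (n : ℝ) - k₂ - k = n - k₁ by rw [hk]; ring] at this
  have hP' := (summable_int_comp_sub hP k₂).add (summable_int_comp_sub hP k₁)
  have hsum := ((hP'.mul_left (jb k ^ (-γ))).add (summable_int_comp_sub hT k₂)).mul_left (2 ^ β)
  calc ∑' n : ℤ, jb (n - k₁) ^ (-β) * jb (n - k₂) ^ (-γ)
      ≤ ∑' n : ℤ, 2 ^ β * (jb k ^ (-γ) * (P (n - k₂) + P (n - k₁)) + T (n - k₂)) :=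
        (hsum.of_nonneg_of_le (fun _ => mul_nonneg (jb_rpow_nonneg _ _) (jb_rpow_nonneg _ _))
          hpt).tsum_le_tsum hpt hsum
    _ = 2 ^ β * (jb k ^ (-γ) * (2 * ∑' n : ℤ, P n) + ∑' n : ℤ, T n) := by
        rw [tsum_mul_left, (hP'.mul_left _).tsum_add (summable_int_comp_sub hT k₂), tsum_mul_left,
          (summable_int_comp_sub hP k₂).tsum_add (summable_int_comp_sub hP k₁),
          tsum_int_comp_sub, tsum_int_comp_sub, tsum_int_comp_sub, two_mul]

theorem tsum_jb_rpow_mul_jb_rpow_le {β γ : ℝ} (hγ : 0 ≤ γ) (hβγ : γ ≤ β) (h : 1 < β + γ) :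
    ∃ C > 0, ∀ k₁ k₂ : ℤ, ∑' n : ℤ, jb (n - k₁) ^ (-β) * jb (n - k₂) ^ (-γ)
      ≤ C * (jb (k₁ - k₂) ^ (-γ) * phi β (k₁ - k₂)) := by
  have hβ : 0 ≤ β := hγ.trans hβγ
  obtain ⟨CP, hCP, hP⟩ := exists_tsum_int_jbTrunc_le_phi hβ
  obtain ⟨CT, hCT, hT⟩ := exists_tsum_int_jbTail_le h
  obtain ⟨CL, hCL, hL⟩ := rpow_one_sub_le_phi β
  refine ⟨2 ^ β * (6 * CP + CT * CL), by positivity, fun k₁ k₂ => ?_⟩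
  set k : ℝ := k₁ - k₂ with hk
  -- `|k|` is a natural number, so the truncation radii are too
  have hK : ((k₁ - k₂).natAbs : ℝ) = |k| := by simp [hk]
  have hPs := summable_int_jbTrunc β (3 * (k₁ - k₂).natAbs)
  have hTs := summable_int_jbTail h (k₁ - k₂).natAbs
  have hPb := hP (3 * (k₁ - k₂).natAbs)
  have hTb := hT (k₁ - k₂).natAbs
  simp only [Nat.cast_mul, Nat.cast_ofNat, hK, jb_abs] at hPs hPb hTs hTb
  have hphi : phi β (3 * |k|) ≤ 3 * phi β k := by
    simpa [phi_abs] using phi_natCast_mul_le hβ (c := 3) (by norm_num) |k|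
  have hdecay : jb k ^ (1 - (β + γ)) ≤ jb k ^ (-γ) * (CL * phi β k) := by
    rw [show 1 - (β + γ) = -γ + (1 - β) by ring, Real.rpow_add (jb_pos k)]
    exact mul_le_mul_of_nonneg_left (hL k) (jb_rpow_nonneg k _)
  calc ∑' n : ℤ, jb (n - k₁) ^ (-β) * jb (n - k₂) ^ (-γ)
      ≤ 2 ^ β * (jb k ^ (-γ) * (2 * ∑' n : ℤ, jbTrunc β (3 * |k|) n)
          + ∑' n : ℤ, jbTail (β + γ) |k| n) :=
        tsum_jb_rpow_mul_le_tsum_jbTrunc_add_tsum_jbTail hγ hβγ k₁ k₂ hPs hTs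
    _ ≤ 2 ^ β * (jb k ^ (-γ) * (2 * (CP * (3 * phi β k)))
          + CT * (jb k ^ (-γ) * (CL * phi β k))) := by
        gcongr
        · exact jb_rpow_nonneg k _
        · exact hPb.trans (mul_le_mul_of_nonneg_left hphi hCP.le)
        · exact hTb.trans (mul_le_mul_of_nonneg_left hdecay hCT.le)
    _ = 2 ^ β * (6 * CP + CT * CL) * (jb k ^ (-γ) * phi β k) := by ring

/-- discrete convolution estimate for Japanese brackets. -/
theorem stmt_0 (β γ : ℝ) (hβγ : γ ≤ β) (hγ : 0 ≤ γ) (h : 1 < β + γ) :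
    ∃ C > 0, ∀ k₁ k₂ : ℤ,
      ∑' n : ℤ, 1 / (jb ((n : ℝ) - (k₁ : ℝ)) ^ β * jb ((n : ℝ) - (k₂ : ℝ)) ^ γ)
        ≤ C * jb ((k₁ : ℝ) - (k₂ : ℝ)) ^ (-γ) * phi β ((k₁ : ℝ) - (k₂ : ℝ)) := by
  obtain ⟨C, hC, hbound⟩ := tsum_jb_rpow_mul_jb_rpow_le hγ hβγ h
  refine ⟨C, hC, fun k₁ k₂ => ?_⟩
  simp_rw [one_div, mul_inv, ← Real.rpow_neg (jb_pos _).le, mul_assoc]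
  exact hbound k₁ k₂
end

section
/- Fix α ∈ (1/2, 1) and c ≥ 1. Define f_c : ℝ → ℝ by f_c(x) = |x + c|^{2α} − |x − c|^{2α}. Then for every real x, the derivative satisfies f_c'(x) ≥ C_α · c / max(c, |x|)^{2−2α} for some constant C_α > 0 depending only on α. -/
/-!
With `p = 2α ∈ (1, 2)`, the derivative is `p (φ(x + c) - φ(x - c))` where `φ(y) = |y|^(p-2) y` is
odd, so it is even in `x` and we may take `x ≥ 0`. For `x ≤ c`, `φ(x + c) ≥ c^(p-1)` while
`φ(x - c) ≤ 0`. For `x > c`, concavity of `t ↦ t^(p-1)` bounds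
`(x + c)^(p-1) - (x - c)^(p-1)` below by `(p - 1) (x + c)^(p-2) 2c ≥ (p - 1) c x^(p-2)`.
Both cases give the bound with `C = 2α - 1`.
-/

open Real

theorem mul_rpow_sub_one_mul_sub_le_rpow_sub_rpow {β a b : ℝ} (hβ0 : 0 ≤ β) (hβ1 : β ≤ 1)
    (ha : 0 ≤ a) (hb : 0 < b) :
    β * b ^ (β - 1) * (b - a) ≤ b ^ β - a ^ β := by
  have hbernoulli : (1 + (a / b - 1)) ^ β ≤ 1 + β * (a / b - 1) :=
    rpow_one_add_le_one_add_mul_self (by linarith [div_nonneg ha hb.le]) hβ0 hβ1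
  rw [add_sub_cancel, div_rpow ha hb.le, div_le_iff₀ (rpow_pos_of_pos hb β)] at hbernoulli
  have hpow : b ^ β = b ^ (β - 1) * b := by
    rw [← rpow_add_one hb.ne', sub_add_cancel]
  rw [hpow] at hbernoulli ⊢
  field_simp at hbernoulli
  linarith

noncomputable def signedRpow (r y : ℝ) : ℝ := |y| ^ r * y

theorem signedRpow_neg (r y : ℝ) : signedRpow r (-y) = -signedRpow r y := by
  simp only [signedRpow, abs_neg, mul_neg]

theorem signedRpow_of_pos {y : ℝ} (r : ℝ) (hy : 0 < y) : signedRpow r y = y ^ (r + 1) := by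
  rw [signedRpow, abs_of_pos hy, rpow_add_one hy.ne']

theorem signedRpow_nonpos {y : ℝ} (r : ℝ) (hy : y ≤ 0) : signedRpow r y ≤ 0 :=
  mul_nonpos_of_nonneg_of_nonpos (by positivity) hy

theorem hasDerivAt_abs_add_rpow_sub_abs_sub_rpow {p : ℝ} (hp : 1 < p) (c x : ℝ) :
    HasDerivAt (fun y : ℝ => |y + c| ^ p - |y - c| ^ p)
      (p * (signedRpow (p - 2) (x + c) - signedRpow (p - 2) (x - c))) x := by
  have hplus : HasDerivAt (fun y : ℝ => |y + c| ^ p) (p * signedRpow (p - 2) (x + c)) x := by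
    simpa [signedRpow, Function.comp_def, mul_assoc] using
      (hasDerivAt_abs_rpow (x + c) hp).comp x ((hasDerivAt_id x).add_const c)
  have hminus : HasDerivAt (fun y : ℝ => |y - c| ^ p) (p * signedRpow (p - 2) (x - c)) x := by
    simpa [signedRpow, Function.comp_def, mul_assoc] using
      (hasDerivAt_abs_rpow (x - c) hp).comp x ((hasDerivAt_id x).sub_const c)
  rw [mul_sub]
  exact hplus.sub hminus

section

variable {p c : ℝ}

theorem rpow_le_signedRpow_add_sub_signedRpow_sub_of_le (hp : 1 ≤ p) (hc : 0 < c) {x : ℝ}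
    (hx : 0 ≤ x) (hxc : x ≤ c) :
    c ^ (p - 1) ≤ signedRpow (p - 2) (x + c) - signedRpow (p - 2) (x - c) := by
  have hminus := signedRpow_nonpos (p - 2) (show x - c ≤ 0 by linarith)
  have hplus : c ^ (p - 1) ≤ signedRpow (p - 2) (x + c) := by
    rw [signedRpow_of_pos _ (by linarith), show p - 2 + 1 = p - 1 by ring]
    exact rpow_le_rpow hc.le (by linarith) (by linarith)
  linarith

theorem mul_rpow_le_signedRpow_add_sub_signedRpow_sub_of_lt (hp : 1 < p) (hp2 : p ≤ 2)
    (hc : 0 < c) {x : ℝ} (hxc : c < x) :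
    (p - 1) * c * x ^ (p - 2) ≤ signedRpow (p - 2) (x + c) - signedRpow (p - 2) (x - c) := by
  have hx : 0 < x := hc.trans hxc
  rw [signedRpow_of_pos _ (by linarith), signedRpow_of_pos _ (by linarith),
    show p - 2 + 1 = p - 1 by ring]
  have htwo : (1 : ℝ) / 2 ≤ 2 ^ (p - 2) := by
    have := rpow_le_rpow_of_exponent_le one_le_two (show (-1 : ℝ) ≤ p - 2 by linarith)
    rwa [rpow_neg_one, ← one_div] at this
  have hmono : 2 ^ (p - 2) * x ^ (p - 2) ≤ (x + c) ^ (p - 2) := by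
    rw [← mul_rpow zero_le_two hx.le]
    exact rpow_le_rpow_of_nonpos (by linarith) (by linarith) (by linarith)
  have hp1 : 0 ≤ p - 1 := by linarith
  calc (p - 1) * c * x ^ (p - 2) = (p - 1) * (2 * c) * (1 / 2 * x ^ (p - 2)) := by ring
    _ ≤ (p - 1) * (2 * c) * (2 ^ (p - 2) * x ^ (p - 2)) := by gcongr
    _ ≤ (p - 1) * (2 * c) * (x + c) ^ (p - 2) := by gcongr
    _ = (p - 1) * (x + c) ^ (p - 1 - 1) * (x + c - (x - c)) := by ring_nf
    _ ≤ (x + c) ^ (p - 1) - (x - c) ^ (p - 1) :=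
      mul_rpow_sub_one_mul_sub_le_rpow_sub_rpow hp1 (by linarith) (by linarith) (by linarith)

theorem mul_max_rpow_le_signedRpow_add_sub_signedRpow_sub (hp : 1 < p) (hp2 : p ≤ 2)
    (hc : 0 < c) (x : ℝ) :
    (p - 1) * c * max c |x| ^ (p - 2) ≤
      signedRpow (p - 2) (x + c) - signedRpow (p - 2) (x - c) := by
  wlog hx : 0 ≤ x generalizing x
  · have hsymm : signedRpow (p - 2) (-x + c) - signedRpow (p - 2) (-x - c) =
        signedRpow (p - 2) (x + c) - signedRpow (p - 2) (x - c) := by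
      rw [show -x + c = -(x - c) by ring, show -x - c = -(x + c) by ring, signedRpow_neg,
        signedRpow_neg]
      ring
    simpa only [abs_neg, hsymm] using this (-x) (by linarith)
  rw [abs_of_nonneg hx]
  rcases le_or_gt x c with hxc | hxc
  · rw [max_eq_left hxc]
    have hpow : c * c ^ (p - 2) = c ^ (p - 1) := by
      rw [mul_comm, ← rpow_add_one hc.ne']
      ring_nf
    calc (p - 1) * c * c ^ (p - 2) ≤ c * c ^ (p - 2) := by
          rw [mul_assoc]; exact mul_le_of_le_one_left (by positivity) (by linarith)
      _ ≤ _ := hpow ▸ rpow_le_signedRpow_add_sub_signedRpow_sub_of_le hp.le hc hx hxc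
  · rw [max_eq_right hxc.le]
    exact mul_rpow_le_signedRpow_add_sub_signedRpow_sub_of_lt hp hp2 hc hxc

end

/-- derivative lower bound for `f_c(x) = |x+c|^{2α} - |x-c|^{2α}`. -/
theorem stmt_3 (α : ℝ) (hα : 1 / 2 < α) (hα1 : α < 1) :
    ∃ C > 0, ∀ c : ℝ, 1 ≤ c → ∀ x : ℝ,
      C * c / (max c |x|) ^ (2 - 2 * α)
        ≤ deriv (fun y : ℝ => |y + c| ^ (2 * α) - |y - c| ^ (2 * α)) x := by
  have hp : 1 < 2 * α := by linarith
  refine ⟨2 * α - 1, by linarith, fun c hc x => ?_⟩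
  have hm : 0 < max c |x| := lt_max_of_lt_left (by linarith)
  rw [(hasDerivAt_abs_add_rpow_sub_abs_sub_rpow hp c x).deriv, div_eq_mul_inv,
    ← rpow_neg hm.le, neg_sub]
  have hbound := mul_max_rpow_le_signedRpow_add_sub_signedRpow_sub hp (by linarith)
    (show 0 < c by linarith) x
  have hnonneg := le_trans (by positivity) hbound
  exact hbound.trans (le_mul_of_one_le_left hnonneg hp.le)
end
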